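/- Let R be a commutative Noetherian ring, I an ideal of R with irredundant minimal prime decomposition I = p₁ ∩ ... ∩ p_s (s > 1), and suppose I is 'point-saturated' in the following sense: there is a set X of ring homomorphisms R → K to a field K such that I = { f ∈ R : ev(f) = 0 for all ev ∈ X with I ⊆ ker(ev) }. Then each minimal prime pᵢ is also point-saturated: pᵢ = { f ∈ R : ev(f) = 0 for all ev ∈ X with pᵢ ⊆ ker(ev) }. -/
import Mathlib


/-- Let `R` be a Noetherian commutative ring and `I` an ideal with an irredundant
minimal prime decomposition `I = p₁ ∩ ... ∩ p_s` (`s > 1`).  Suppose `I` is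
point-saturated with respect to a set `X` of `K`-points (ring homomorphisms to a
field `K`): `I` consists exactly of the elements vanishing at every point of `X`
lying on `V(I)`.  Then each minimal prime `pᵢ` is also point-saturated. -/
theorem stmt10 {R K : Type*} [CommRing R] [IsNoetherianRing R] [Field K]
    (I : Ideal R) (s : ℕ) (hs : 1 < s) (p : Fin s → Ideal R)
    (hmin : ∀ i, p i ∈ I.minimalPrimes)
    (hdec : I = ⨅ i, p i)
    (hirr : ∀ i, ¬ (⨅ j ∈ ({i}ᶜ : Set (Fin s)), p j) ≤ p i)
    (X : Set (R →+* K))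
    (hsat : ∀ f : R, f ∈ I ↔ ∀ ev ∈ X, I ≤ RingHom.ker ev → ev f = 0) :
    ∀ i, ∀ f : R, f ∈ p i ↔ ∀ ev ∈ X, p i ≤ RingHom.ker ev → ev f = 0 := by
  intro i f
  have hIle : ∀ j, I ≤ p j := fun j => hdec ▸ iInf_le _ j
  have hpi : (p i).IsPrime := (hmin i).1.1
  constructor
  · intro hf ev _ hle
    exact hle hf
  · intro hf
    -- pick g in all p j, j ≠ i, but not in p i
    obtain ⟨g, hg, hgi⟩ := SetLike.not_le_iff_exists.mp (hirr i)
    have hgj : ∀ j, j ≠ i → g ∈ p j := by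
      intro j hj
      have := Ideal.mem_iInf.mp hg j
      exact Ideal.mem_iInf.mp this hj
    have hfg : f * g ∈ I := by
      rw [hsat]
      intro ev hev hIker
      have hker : (RingHom.ker ev).IsPrime := RingHom.ker_isPrime ev
      -- ker ev contains ⨅ p j, hence some p j
      have : ∃ j, p j ≤ RingHom.ker ev := by
        have h1 : (Finset.univ.inf p) ≤ RingHom.ker ev := by
          rw [Finset.inf_eq_iInf]
          simpa using (hdec ▸ hIker : (⨅ j, p j) ≤ RingHom.ker ev)
        obtain ⟨j, _, hj⟩ := hker.inf_le'.mp h1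
        exact ⟨j, hj⟩
      obtain ⟨j, hj⟩ := this
      by_cases hji : j = i
      · subst hji
        have : ev f = 0 := hf ev hev hj
        simp [map_mul, this]
      · have : ev g = 0 := hj (hgj j hji)
        simp [map_mul, this]
    have : f * g ∈ p i := hIle i hfg
    rcases hpi.mem_or_mem this with h | h
    · exact h
    · exact absurd h hgi
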